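/- Let s, t ≥ 1 be integers. The group H = U_s × U_t acts on the set F^{s×t} of s×t matrices over F by X^{(A,B)} = A⁻¹XB for A ∈ U_s, B ∈ U_t. Then the set of quasimonomial matrices in F^{s×t} is a complete set of orbit representatives for this action; that is, every orbit of H on F^{s×t} contains exactly one quasimonomial matrix. -/

import Mathlib

open Matrix

/-- A square matrix is (upper) unitriangular if all entries below the diagonal vanish
and all diagonal entries equal `1`. -/
def IsUnitriangular {n : ℕ} {F : Type*} [Field F] (A : Matrix (Fin n) (Fin n) F) : Prop :=
  (∀ i j : Fin n, j < i → A i j = 0) ∧ ∀ i : Fin n, A i i = 1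

theorem IsUnitriangular.mul {n : ℕ} {F : Type*} [Field F]
    {A B : Matrix (Fin n) (Fin n) F}
    (hA : IsUnitriangular A) (hB : IsUnitriangular B) : IsUnitriangular (A * B) := by
  constructor
  · intro i j hij
    rw [Matrix.mul_apply]
    apply Finset.sum_eq_zero
    intro m _
    rcases lt_or_ge m i with h | h
    · rw [hA.1 i m h, zero_mul]
    · rw [hB.1 m j (lt_of_lt_of_le hij h), mul_zero]
  · intro i
    rw [Matrix.mul_apply, Finset.sum_eq_single i]
    · rw [hA.2, hB.2, one_mul]
    · intro m _ hm
      rcases lt_or_gt_of_ne hm with h | h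
      · rw [hA.1 i m h, zero_mul]
      · rw [hB.1 m i h, mul_zero]
    · intro h
      exact absurd (Finset.mem_univ i) h

theorem IsUnitriangular.inv {n : ℕ} {F : Type*} [Field F] {A : GL (Fin n) F}
    (hA : IsUnitriangular (A : Matrix (Fin n) (Fin n) F)) :
    IsUnitriangular ((A⁻¹ : GL (Fin n) F) : Matrix (Fin n) (Fin n) F) := by
  letI := A.invertible
  have hBT : Matrix.BlockTriangular (A : Matrix (Fin n) (Fin n) F) id := fun i j h => hA.1 i j h
  have hBTinv : Matrix.BlockTriangular ((A : Matrix (Fin n) (Fin n) F)⁻¹) id :=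
    Matrix.blockTriangular_inv_of_blockTriangular hBT
  have hcoe : ((A⁻¹ : GL (Fin n) F) : Matrix (Fin n) (Fin n) F)
      = ((A : Matrix (Fin n) (Fin n) F)⁻¹) := Matrix.coe_units_inv A
  constructor
  · intro i j hij
    rw [hcoe]
    exact hBTinv hij
  · intro i
    have hmul : (A : Matrix (Fin n) (Fin n) F) * ((A⁻¹ : GL (Fin n) F) : Matrix (Fin n) (Fin n) F)
        = 1 := by
      rw [← Units.val_mul, mul_inv_cancel, Units.val_one]
    have h1 : ((A : Matrix (Fin n) (Fin n) F)
        * ((A⁻¹ : GL (Fin n) F) : Matrix (Fin n) (Fin n) F)) i i = 1 := by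
      rw [hmul, Matrix.one_apply_eq]
    rw [Matrix.mul_apply, Finset.sum_eq_single i] at h1
    · rw [hA.2 i, one_mul] at h1
      exact h1
    · intro m _ hm
      rcases lt_or_gt_of_ne hm with h | h
      · rw [hA.1 i m h, zero_mul]
      · rw [hcoe, hBTinv h, mul_zero]
    · intro h
      exact absurd (Finset.mem_univ i) h

/-- `UT F n` is the subgroup of `GL (Fin n) F` of upper unitriangular matrices,
i.e. the group `U_n` of the paper. -/
def UT (F : Type*) [Field F] (n : ℕ) : Subgroup (GL (Fin n) F) where
  carrier := {A | IsUnitriangular (A : Matrix (Fin n) (Fin n) F)}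
  one_mem' := by
    constructor
    · intro i j hij
      show (1 : GL (Fin n) F).val i j = 0
      rw [Units.val_one]
      exact Matrix.one_apply_ne hij.ne'
    · intro i
      show (1 : GL (Fin n) F).val i i = 1
      rw [Units.val_one]
      exact Matrix.one_apply_eq i
  mul_mem' := by
    intro A B hA hB
    show IsUnitriangular ((A * B : GL (Fin n) F) : Matrix (Fin n) (Fin n) F)
    rw [Units.val_mul]
    exact IsUnitriangular.mul hA hB
  inv_mem' := by
    intro A hA
    exact IsUnitriangular.inv hA

/-- The full triviality of a column: combined with unitriangularity, vanishing above the
diagonal in a column means the column is a standard basis vector. -/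
theorem trivial_col {n : ℕ} {F : Type*} [Field F] {A : Matrix (Fin n) (Fin n) F}
    (h1 : IsUnitriangular A) {c : Fin n}
    (h2 : ∀ k : Fin n, k < c → A k c = 0) {m : Fin n} (hm : m ≠ c) : A m c = 0 := by
  rcases lt_or_gt_of_ne hm with h | h
  · exact h2 m h
  · exact h1.1 m c h

/-- `Pcol F n i` is the subgroup `P_{n,i}` of `U_n` (inside `GL (Fin n) F`): unitriangular
matrices whose `i`-th column (`1`-based) is trivial. -/
def Pcol (F : Type*) [Field F] (n : ℕ) (i : ℕ) : Subgroup (GL (Fin n) F) where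
  carrier := {A | IsUnitriangular (A : Matrix (Fin n) (Fin n) F) ∧
    ∀ k c : Fin n, (c : ℕ) + 1 = i → k < c → (A : Matrix (Fin n) (Fin n) F) k c = 0}
  one_mem' := by
    refine ⟨(UT F n).one_mem, ?_⟩
    intro k c _ hk
    show (1 : GL (Fin n) F).val k c = 0
    rw [Units.val_one]
    exact Matrix.one_apply_ne hk.ne
  mul_mem' := by
    rintro A B ⟨hA1, hA2⟩ ⟨hB1, hB2⟩
    refine ⟨(UT F n).mul_mem hA1 hB1, ?_⟩
    intro k c hc hk
    show ((A * B : GL (Fin n) F) : Matrix (Fin n) (Fin n) F) k c = 0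
    rw [Units.val_mul, Matrix.mul_apply, Finset.sum_eq_single c]
    · rw [hA2 k c hc hk, zero_mul]
    · intro m _ hm
      rw [trivial_col hB1 (fun k' hk' => hB2 k' c hc hk') hm, mul_zero]
    · intro h
      exact absurd (Finset.mem_univ c) h
  inv_mem' := by
    rintro A ⟨hA1, hA2⟩
    refine ⟨IsUnitriangular.inv hA1, ?_⟩
    intro k c hc hk
    have hBA : ((A⁻¹ : GL (Fin n) F) : Matrix (Fin n) (Fin n) F)
        * (A : Matrix (Fin n) (Fin n) F) = 1 := by
      rw [← Units.val_mul, inv_mul_cancel, Units.val_one]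
    have h0 : (((A⁻¹ : GL (Fin n) F) : Matrix (Fin n) (Fin n) F)
        * (A : Matrix (Fin n) (Fin n) F)) k c = 0 := by
      rw [hBA]
      exact Matrix.one_apply_ne hk.ne
    rw [Matrix.mul_apply, Finset.sum_eq_single c] at h0
    · rw [hA1.2 c, mul_one] at h0
      exact h0
    · intro m _ hm
      rw [trivial_col hA1 (fun k' hk' => hA2 k' c hc hk') hm, mul_zero]
    · intro h
      exact absurd (Finset.mem_univ c) h

/-- `Qcol F n i j` is the subgroup `Q_{n,i,j}` of `U_n` (inside `GL (Fin n) F`), for `1`-based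
indices `i < j`: unitriangular matrices `A` with `A_{y,i} = 0` for `y < i` and `A_{x,j} = 0`
for `x < j`, `x ≠ i`. -/
def Qcol (F : Type*) [Field F] (n : ℕ) (i j : ℕ) : Subgroup (GL (Fin n) F) where
  carrier := {A | IsUnitriangular (A : Matrix (Fin n) (Fin n) F) ∧
    (∀ y c : Fin n, (c : ℕ) + 1 = i → (y : ℕ) + 1 < i →
      (A : Matrix (Fin n) (Fin n) F) y c = 0) ∧
    (∀ x c : Fin n, (c : ℕ) + 1 = j → (x : ℕ) + 1 < j → (x : ℕ) + 1 ≠ i →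
      (A : Matrix (Fin n) (Fin n) F) x c = 0)}
  one_mem' := by
    refine ⟨(UT F n).one_mem, ?_, ?_⟩
    · intro y c hc hy
      show (1 : GL (Fin n) F).val y c = 0
      rw [Units.val_one]
      refine Matrix.one_apply_ne fun h => ?_
      rw [h] at hy
      omega
    · intro x c hc hx _
      show (1 : GL (Fin n) F).val x c = 0
      rw [Units.val_one]
      refine Matrix.one_apply_ne fun h => ?_
      rw [h] at hx
      omega
  mul_mem' := by
    rintro A B ⟨hA1, hA2, hA3⟩ ⟨hB1, hB2, hB3⟩
    have colI : ∀ (M : Matrix (Fin n) (Fin n) F), IsUnitriangular M →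
        (∀ y c : Fin n, (c : ℕ) + 1 = i → (y : ℕ) + 1 < i → M y c = 0) →
        ∀ y c : Fin n, (c : ℕ) + 1 = i → y ≠ c → M y c = 0 := by
      intro M hM1 hM2 y c hc hy
      rcases lt_or_gt_of_ne hy with h | h
      · have h' : (y : ℕ) < (c : ℕ) := h
        exact hM2 y c hc (by omega)
      · exact hM1.1 y c h
    have colJ : ∀ (M : Matrix (Fin n) (Fin n) F), IsUnitriangular M →
        (∀ x c : Fin n, (c : ℕ) + 1 = j → (x : ℕ) + 1 < j → (x : ℕ) + 1 ≠ i → M x c = 0) →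
        ∀ x c : Fin n, (c : ℕ) + 1 = j → x ≠ c → (x : ℕ) + 1 ≠ i → M x c = 0 := by
      intro M hM1 hM3 x c hc hx hxi
      rcases lt_or_gt_of_ne hx with h | h
      · have h' : (x : ℕ) < (c : ℕ) := h
        exact hM3 x c hc (by omega) hxi
      · exact hM1.1 x c h
    refine ⟨(UT F n).mul_mem hA1 hB1, ?_, ?_⟩
    · intro y c hc hy
      show ((A * B : GL (Fin n) F) : Matrix (Fin n) (Fin n) F) y c = 0
      rw [Units.val_mul, Matrix.mul_apply, Finset.sum_eq_single c]
      · rw [hA2 y c hc hy, zero_mul]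
      · intro m _ hm
        rw [colI _ hB1 hB2 m c hc hm, mul_zero]
      · intro h
        exact absurd (Finset.mem_univ c) h
    · intro x c hc hx hxi
      show ((A * B : GL (Fin n) F) : Matrix (Fin n) (Fin n) F) x c = 0
      rw [Units.val_mul, Matrix.mul_apply]
      apply Finset.sum_eq_zero
      intro m _
      by_cases hmi : (m : ℕ) + 1 = i
      · have hxm : x ≠ m := fun h => hxi (by rw [h]; exact hmi)
        rw [colI _ hA1 hA2 x m hmi hxm, zero_mul]
      · by_cases hmc : m = c
        · subst hmc
          rw [hA3 x m hc hx hxi, zero_mul]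
        · rw [colJ _ hB1 hB3 m c hc hmc hmi, mul_zero]
  inv_mem' := by
    rintro A ⟨hA1, hA2, hA3⟩
    have colI : ∀ y c : Fin n, (c : ℕ) + 1 = i → y ≠ c →
        (A : Matrix (Fin n) (Fin n) F) y c = 0 := by
      intro y c hc hy
      rcases lt_or_gt_of_ne hy with h | h
      · have h' : (y : ℕ) < (c : ℕ) := h
        exact hA2 y c hc (by omega)
      · exact hA1.1 y c h
    have colJ : ∀ x c : Fin n, (c : ℕ) + 1 = j → x ≠ c → (x : ℕ) + 1 ≠ i →
        (A : Matrix (Fin n) (Fin n) F) x c = 0 := by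
      intro x c hc hx hxi
      rcases lt_or_gt_of_ne hx with h | h
      · have h' : (x : ℕ) < (c : ℕ) := h
        exact hA3 x c hc (by omega) hxi
      · exact hA1.1 x c h
    have hBA : ((A⁻¹ : GL (Fin n) F) : Matrix (Fin n) (Fin n) F)
        * (A : Matrix (Fin n) (Fin n) F) = 1 := by
      rw [← Units.val_mul, inv_mul_cancel, Units.val_one]
    have hBcolI : ∀ y c : Fin n, (c : ℕ) + 1 = i → y ≠ c →
        ((A⁻¹ : GL (Fin n) F) : Matrix (Fin n) (Fin n) F) y c = 0 := by
      intro y c hc hy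
      have h0 : (((A⁻¹ : GL (Fin n) F) : Matrix (Fin n) (Fin n) F)
          * (A : Matrix (Fin n) (Fin n) F)) y c = 0 := by
        rw [hBA]
        exact Matrix.one_apply_ne hy
      rw [Matrix.mul_apply, Finset.sum_eq_single c] at h0
      · rw [hA1.2 c, mul_one] at h0
        exact h0
      · intro m _ hm
        rw [colI m c hc hm, mul_zero]
      · intro h
        exact absurd (Finset.mem_univ c) h
    refine ⟨IsUnitriangular.inv hA1, ?_, ?_⟩
    · intro y c hc hy
      refine hBcolI y c hc fun h => ?_
      rw [h] at hy
      omega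
    · intro x c hc hx hxi
      have hxc : x ≠ c := fun h => by rw [h] at hx; omega
      have h0 : (((A⁻¹ : GL (Fin n) F) : Matrix (Fin n) (Fin n) F)
          * (A : Matrix (Fin n) (Fin n) F)) x c = 0 := by
        rw [hBA]
        exact Matrix.one_apply_ne hxc
      rw [Matrix.mul_apply, Finset.sum_eq_single c] at h0
      · rw [hA1.2 c, mul_one] at h0
        exact h0
      · intro m _ hm
        by_cases hmi : (m : ℕ) + 1 = i
        · have hxm : x ≠ m := fun h => hxi (by rw [h]; exact hmi)
          rw [hBcolI x m hmi hxm, zero_mul]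
        · rw [colJ m c hc hm hmi, mul_zero]
      · intro h
        exact absurd (Finset.mem_univ c) h

/-- `f : G → ℂ` is an irreducible (complex) character of `G` if it is the character of some
irreducible (= simple) finite-dimensional complex representation of `G`. -/
def IsIrrChar {G : Type} [Group G] (f : G → ℂ) : Prop :=
  ∃ V : FDRep ℂ G, CategoryTheory.Simple V ∧ f = fun g => FDRep.character V g

/-- `Nk G k` is the number `N_k(G)` of irreducible complex characters of `G` of degree `k`
(recall that the degree of a character `χ` is `χ(1)`). -/
noncomputable def Nk (G : Type) [Group G] (k : ℕ) : ℕ :=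
  Set.ncard {f : G → ℂ | IsIrrChar f ∧ f 1 = (k : ℂ)}

/-- A matrix is quasimonomial if it has at most one nonzero entry in every row and in
every column. -/
def Quasimonomial {s t : ℕ} {F : Type*} [Field F] (T : Matrix (Fin s) (Fin t) F) : Prop :=
  (∀ (i : Fin s) (j j' : Fin t), T i j ≠ 0 → T i j' ≠ 0 → j = j') ∧
  (∀ (i i' : Fin s) (j : Fin t), T i j ≠ 0 → T i' j ≠ 0 → i = i')

/-!
Existence is Gaussian elimination from the bottom row up. The leftmost nonzero entry of a row
clears the rest of that row by adding multiples of its column to the columns on its right, and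
then the rest of its column by adding multiples of its row to the rows above; both operations are
unitriangular. From the current row down, every nonzero entry is then alone in its row and column.

Uniqueness is stated as `P * T' = T * Q` for unitriangular `P`, `Q`, which avoids inverses.
Dropping the last column or the first row of both sides yields the same situation for smaller
matrices, so by induction `T` and `T'` can differ only in the top right corner, and
quasimonomiality rules that out as well.
-/

section

variable {F : Type*} [Field F] {n s t : ℕ}

lemma isUnitriangular_one : IsUnitriangular (1 : Matrix (Fin n) (Fin n) F) :=
  ⟨fun _ _ h => one_apply_ne h.ne', one_apply_eq⟩

lemma IsUnitriangular.submatrix {m : ℕ} {A : Matrix (Fin n) (Fin n) F}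
    (hA : IsUnitriangular A) {f : Fin m → Fin n} (hf : StrictMono f) :
    IsUnitriangular (A.submatrix f f) :=
  ⟨fun _ _ h => hA.1 _ _ (hf h), fun i => hA.2 (f i)⟩

lemma IsUnitriangular.det_eq_one {A : Matrix (Fin n) (Fin n) F}
    (hA : IsUnitriangular A) : A.det = 1 := by
  rw [det_of_isUpperTriangular (M := A) fun _ _ h => hA.1 _ _ h]
  exact Finset.prod_eq_one fun i _ => hA.2 i

lemma Quasimonomial.submatrix {s' t' : ℕ} {T : Matrix (Fin s) (Fin t) F}
    (hT : Quasimonomial T) {f : Fin s' → Fin s} {g : Fin t' → Fin t}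
    (hf : Function.Injective f) (hg : Function.Injective g) :
    Quasimonomial (T.submatrix f g) :=
  ⟨fun i _ _ h h' => hg (hT.1 (f i) _ _ h h'), fun _ _ j h h' => hf (hT.2 _ _ (g j) h h')⟩

lemma IsUnitriangular.submatrix_mul_castSucc {Q : Matrix (Fin (t + 1)) (Fin (t + 1)) F}
    (hQ : IsUnitriangular Q) (T : Matrix (Fin s) (Fin (t + 1)) F) :
    (T * Q).submatrix id Fin.castSucc =
      T.submatrix id Fin.castSucc * Q.submatrix Fin.castSucc Fin.castSucc := by
  ext i l
  simp [mul_apply, Fin.sum_univ_castSucc, hQ.1 (Fin.last t) l.castSucc (Fin.castSucc_lt_last l)]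

lemma IsUnitriangular.submatrix_succ_mul {P : Matrix (Fin (s + 1)) (Fin (s + 1)) F}
    (hP : IsUnitriangular P) (T : Matrix (Fin (s + 1)) (Fin t) F) :
    (P * T).submatrix Fin.succ id = P.submatrix Fin.succ Fin.succ * T.submatrix Fin.succ id := by
  ext k j
  simp [mul_apply, Fin.sum_univ_succ, hP.1 k.succ 0 k.succ_pos]

/-- Either another entry of row `i₀` or column `j₀` is nonzero, forcing both entries at
`(i₀, j₀)` to vanish, or that row and column are otherwise zero, and then the `(i₀, j₀)` entries
of `P * T'` and `T * Q` are those of `T'` and `T`. -/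
lemma Quasimonomial.apply_eq_of_mul_eq_mul {P : Matrix (Fin s) (Fin s) F}
    {Q : Matrix (Fin t) (Fin t) F} {T T' : Matrix (Fin s) (Fin t) F}
    (hP : ∀ i, P i i = 1) (hQ : ∀ j, Q j j = 1) (hT : Quasimonomial T)
    (hT' : Quasimonomial T') (h : P * T' = T * Q) (i₀ : Fin s) (j₀ : Fin t)
    (hoff : ∀ i j, i ≠ i₀ ∨ j ≠ j₀ → T' i j = T i j) : T' i₀ j₀ = T i₀ j₀ := by
  by_cases hrow : ∃ j ≠ j₀, T i₀ j ≠ 0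
  · obtain ⟨j, hj, hTj⟩ := hrow
    have hT'j : T' i₀ j ≠ 0 := by rwa [hoff _ _ (Or.inr hj)]
    rw [not_ne_iff.mp fun h => hj (hT.1 _ _ _ hTj h),
      not_ne_iff.mp fun h => hj (hT'.1 _ _ _ hT'j h)]
  by_cases hcol : ∃ i ≠ i₀, T i j₀ ≠ 0
  · obtain ⟨i, hi, hTi⟩ := hcol
    have hT'i : T' i j₀ ≠ 0 := by rwa [hoff _ _ (Or.inl hi)]
    rw [not_ne_iff.mp fun h => hi (hT.2 _ _ _ hTi h),
      not_ne_iff.mp fun h => hi (hT'.2 _ _ _ hT'i h)]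
  push Not at hrow hcol
  have := congr_fun (congr_fun h i₀) j₀
  rwa [mul_apply, mul_apply, Finset.sum_eq_single i₀, Finset.sum_eq_single j₀, hP, hQ, one_mul,
    mul_one] at this
  · exact fun j _ hj => by rw [hrow j hj, zero_mul]
  · simp
  · exact fun i _ hi => by rw [hoff _ _ (Or.inl hi), hcol i hi, mul_zero]
  · simp

theorem Quasimonomial.eq_of_mul_eq_mul {P : Matrix (Fin s) (Fin s) F}
    {Q : Matrix (Fin t) (Fin t) F} {T T' : Matrix (Fin s) (Fin t) F}
    (hP : IsUnitriangular P) (hQ : IsUnitriangular Q) (hT : Quasimonomial T)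
    (hT' : Quasimonomial T') (h : P * T' = T * Q) : T' = T := by
  induction s generalizing t with
  | zero => exact Subsingleton.elim _ _
  | succ s ihs =>
    induction t with
    | zero => exact Subsingleton.elim _ _
    | succ t iht =>
      have hcols : T'.submatrix id Fin.castSucc = T.submatrix id Fin.castSucc := by
        refine iht (hQ.submatrix Fin.strictMono_castSucc) (hT.submatrix Function.injective_id
          (Fin.castSucc_injective t)) (hT'.submatrix Function.injective_id
          (Fin.castSucc_injective t)) ?_
        rw [← hQ.submatrix_mul_castSucc, ← h]
        rfl
      have hrows : T'.submatrix Fin.succ id = T.submatrix Fin.succ id := by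
        refine ihs (hP.submatrix Fin.strictMono_succ) hQ (hT.submatrix (Fin.succ_injective s)
          Function.injective_id) (hT'.submatrix (Fin.succ_injective s) Function.injective_id) ?_
        rw [← hP.submatrix_succ_mul, h]
        rfl
      have hoff : ∀ i j, i ≠ 0 ∨ j ≠ Fin.last t → T' i j = T i j := by
        rintro i j (hi | hj)
        · obtain ⟨k, rfl⟩ := Fin.exists_succ_eq_of_ne_zero hi
          exact congr_fun (congr_fun hrows k) j
        · obtain ⟨l, rfl⟩ := Fin.exists_castSucc_eq.mpr hj
          exact congr_fun (congr_fun hcols i) l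
      ext i j
      by_cases hij : i ≠ 0 ∨ j ≠ Fin.last t
      · exact hoff i j hij
      · obtain ⟨rfl, rfl⟩ : i = 0 ∧ j = Fin.last t := by tauto
        exact hT.apply_eq_of_mul_eq_mul hP.2 hQ.2 hT' h 0 (Fin.last t) hoff

lemma isUnitriangular_one_add_vecMulVec {u w : Fin n → F}
    (h : ∀ i j, j ≤ i → u i * w j = 0) : IsUnitriangular (1 + vecMulVec u w) := by
  refine ⟨fun i j hji => ?_, fun i => ?_⟩
  · rw [Matrix.add_apply, one_apply_ne hji.ne', vecMulVec_apply, h i j hji.le, zero_add]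
  · rw [Matrix.add_apply, one_apply_eq, vecMulVec_apply, h i i le_rfl, add_zero]

lemma exists_isUnitriangular_mul_row_eq_single (X : Matrix (Fin s) (Fin t) F)
    {k : Fin s} {j₀ : Fin t} (hleft : ∀ j < j₀, X k j = 0) (hpiv : X k j₀ ≠ 0) :
    ∃ B : Matrix (Fin t) (Fin t) F, IsUnitriangular B ∧ (X * B) k = Pi.single j₀ (X k j₀) ∧
      ∀ i j, X i j₀ = 0 ∨ X k j = 0 → (X * B) i j = X i j := by
  set w : Fin t → F := fun j => if j₀ < j then -X k j / X k j₀ else 0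
  set B : Matrix (Fin t) (Fin t) F := 1 + vecMulVec (Pi.single j₀ 1) w
  have hXB : ∀ i j, (X * B) i j = X i j + X i j₀ * w j := by
    intro i j
    rw [Matrix.mul_add, Matrix.mul_one, mul_vecMulVec, mulVec_single_one]
    rfl
  refine ⟨B, isUnitriangular_one_add_vecMulVec fun i j hji => ?_, funext fun j => ?_,
    fun i j hij => ?_⟩
  · rcases eq_or_ne i j₀ with rfl | hi
    · simp [w, not_lt.2 hji]
    · simp [hi]
  · rw [hXB]
    rcases lt_trichotomy j j₀ with hj | rfl | hj
    · simp [w, hleft j hj, hj.ne, not_lt.2 hj.le]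
    · simp [w]
    · simp only [w, if_pos hj, Pi.single_eq_of_ne hj.ne']
      field_simp
      ring
  · rcases hij with h | h <;> simp [hXB, w, h]

lemma exists_isUnitriangular_mul_col_eq_zero (Y : Matrix (Fin s) (Fin t) F)
    {k : Fin s} {j₀ : Fin t} {c : F} (hrow : Y k = Pi.single j₀ c) (hc : c ≠ 0) :
    ∃ C : Matrix (Fin s) (Fin s) F, IsUnitriangular C ∧
      ∀ i j, (C * Y) i j = if i < k ∧ j = j₀ then 0 else Y i j := by
  set v : Fin s → F := fun i => if i < k then -Y i j₀ / c else 0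
  refine ⟨1 + vecMulVec v (Pi.single k 1), isUnitriangular_one_add_vecMulVec fun i j hji => ?_,
    fun i j => ?_⟩
  · rcases eq_or_ne j k with rfl | hj
    · simp [v, not_lt.2 hji]
    · simp [hj]
  · rw [Matrix.add_mul, Matrix.one_mul, vecMulVec_mul, single_one_vecMul, Matrix.add_apply,
      vecMulVec_apply, row, hrow]
    by_cases hi : i < k <;> by_cases hj : j = j₀ <;> simp [v, hi, hj, hc]

def QuasimonomialFrom (k : ℕ) (X : Matrix (Fin s) (Fin t) F) : Prop :=
  (∀ (i : Fin s) (j j' : Fin t), k ≤ i → X i j ≠ 0 → X i j' ≠ 0 → j = j') ∧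
  (∀ (i i' : Fin s) (j : Fin t), k ≤ i → X i j ≠ 0 → X i' j ≠ 0 → i = i')

lemma quasimonomialFrom_self (X : Matrix (Fin s) (Fin t) F) : QuasimonomialFrom s X :=
  ⟨fun i _ _ hi => absurd i.2 (not_lt.2 hi), fun i _ _ hi => absurd i.2 (not_lt.2 hi)⟩

lemma QuasimonomialFrom.quasimonomial {X : Matrix (Fin s) (Fin t) F}
    (h : QuasimonomialFrom 0 X) : Quasimonomial X :=
  ⟨fun i j j' => h.1 i j j' (Nat.zero_le _), fun i i' j => h.2 i i' j (Nat.zero_le _)⟩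

lemma QuasimonomialFrom.of_row_eq_zero {X : Matrix (Fin s) (Fin t) F} {k : Fin s}
    (h : QuasimonomialFrom (k + 1) X) (hk : ∀ j, X k j = 0) : QuasimonomialFrom k X := by
  refine ⟨fun i j j' hi hij => ?_, fun i i' j hi hij => ?_⟩
  · rcases (show k ≤ i from hi).eq_or_lt with rfl | hki
    · exact absurd (hk j) hij
    · exact h.1 i j j' hki hij
  · rcases (show k ≤ i from hi).eq_or_lt with rfl | hki
    · exact absurd (hk j) hij
    · exact h.2 i i' j hki hij

lemma QuasimonomialFrom.exists_quasimonomialFrom_mul_mul {X : Matrix (Fin s) (Fin t) F}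
    {k : Fin s} (h : QuasimonomialFrom (k + 1) X) :
    ∃ (C : Matrix (Fin s) (Fin s) F) (B : Matrix (Fin t) (Fin t) F),
      IsUnitriangular C ∧ IsUnitriangular B ∧ QuasimonomialFrom k (C * X * B) := by
  by_cases hk : ∀ j, X k j = 0
  · exact ⟨1, 1, isUnitriangular_one, isUnitriangular_one, by simpa using h.of_row_eq_zero hk⟩
  push Not at hk
  obtain ⟨j₀, hpiv, hmin⟩ := wellFounded_lt.has_min {j | X k j ≠ 0} hk
  have hleft : ∀ j < j₀, X k j = 0 := fun j hj => not_ne_iff.mp fun hne => hmin j hne hj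
  have hcol : ∀ i, k < i → X i j₀ = 0 := fun i hi =>
    not_ne_iff.mp fun hne => hi.ne' (h.2 i k j₀ hi hne hpiv)
  obtain ⟨B, hB, hrowB, hXB⟩ := exists_isUnitriangular_mul_row_eq_single X hleft hpiv
  obtain ⟨C, hC, hCXB⟩ := exists_isUnitriangular_mul_col_eq_zero (X * B) hrowB hpiv
  refine ⟨C, B, hC, hB, ?_⟩
  rw [Matrix.mul_assoc]
  have hY_below : ∀ i, k < i → ∀ j, (C * (X * B)) i j = X i j := fun i hi j => by
    rw [hCXB, if_neg fun h' => h'.1.asymm hi, hXB i j (Or.inl (hcol i hi))]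
  have hY_row : (C * (X * B)) k = Pi.single j₀ (X k j₀) := funext fun j => by
    rw [hCXB, if_neg fun h' => h'.1.false, hrowB]
  have hY_col : ∀ i ≠ k, (C * (X * B)) i j₀ = 0 := fun i hi => by
    rcases hi.lt_or_gt with hi | hi
    · rw [hCXB, if_pos ⟨hi, rfl⟩]
    · rw [hY_below i hi, hcol i hi]
  have hY_off : ∀ i j, j ≠ j₀ → X k j = 0 → (C * (X * B)) i j = X i j := fun i j hj hkj => by
    rw [hCXB, if_neg fun h' => hj h'.2, hXB i j (Or.inr hkj)]
  have hY_row_ne : ∀ j, (C * (X * B)) k j ≠ 0 → j = j₀ := fun j hj => by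
    by_contra hne
    rw [hY_row, Pi.single_eq_of_ne hne] at hj
    exact hj rfl
  refine ⟨fun i j j' hi hij hij' => ?_, fun i i' j hi hij hi'j => ?_⟩
  · rcases (show k ≤ i from hi).eq_or_lt with rfl | hki
    · rw [hY_row_ne j hij, hY_row_ne j' hij']
    · rw [hY_below i hki] at hij hij'
      exact h.1 i j j' hki hij hij'
  · rcases (show k ≤ i from hi).eq_or_lt with rfl | hki
    · obtain rfl := hY_row_ne j hij
      exact not_ne_iff.mp fun hne => hi'j (hY_col i' hne.symm)
    · rw [hY_below i hki] at hij
      have hj : j ≠ j₀ := fun hj => hij (hj ▸ hcol i hki)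
      have hkj : X k j = 0 := not_ne_iff.mp fun hne => hki.ne' (h.2 i k j hki hij hne)
      rw [hY_off i' j hj hkj] at hi'j
      exact h.2 i i' j hki hij hi'j

lemma QuasimonomialFrom.exists_quasimonomial_mul_mul {k : ℕ} (hk : k ≤ s)
    {X : Matrix (Fin s) (Fin t) F} (h : QuasimonomialFrom k X) :
    ∃ (A : Matrix (Fin s) (Fin s) F) (B : Matrix (Fin t) (Fin t) F),
      IsUnitriangular A ∧ IsUnitriangular B ∧ Quasimonomial (A * X * B) := by
  induction k generalizing X with
  | zero => exact ⟨1, 1, isUnitriangular_one, isUnitriangular_one, by simpa using h.quasimonomial⟩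
  | succ k ih =>
    obtain ⟨C, B, hC, hB, hY⟩ := h.exists_quasimonomialFrom_mul_mul (k := ⟨k, hk⟩)
    obtain ⟨A', B', hA', hB', hq⟩ := ih (by omega) hY
    exact ⟨A' * C, B * B', hA'.mul hC, hB.mul hB', by simpa only [Matrix.mul_assoc] using hq⟩

theorem exists_isUnitriangular_quasimonomial_mul_mul (X : Matrix (Fin s) (Fin t) F) :
    ∃ (A : Matrix (Fin s) (Fin s) F) (B : Matrix (Fin t) (Fin t) F),
      IsUnitriangular A ∧ IsUnitriangular B ∧ Quasimonomial (A * X * B) :=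
  (quasimonomialFrom_self X).exists_quasimonomial_mul_mul le_rfl

lemma IsUnitriangular.exists_coe_eq {A : Matrix (Fin n) (Fin n) F}
    (hA : IsUnitriangular A) : ∃ g : UT F n, ((g : GL (Fin n) F) : Matrix (Fin n) (Fin n) F) = A :=
  ⟨⟨GeneralLinearGroup.mkOfDetNeZero A (by rw [hA.det_eq_one]; exact one_ne_zero), hA⟩, rfl⟩

end

theorem stmt_0_general (F : Type) [Field F] (s t : ℕ) (X : Matrix (Fin s) (Fin t) F) :
    ∃! T : Matrix (Fin s) (Fin t) F, Quasimonomial T ∧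
      ∃ (A : UT F s) (B : UT F t),
        T = (((A⁻¹ : UT F s) : GL (Fin s) F) : Matrix (Fin s) (Fin s) F) * X *
          ((B : GL (Fin t) F) : Matrix (Fin t) (Fin t) F) := by
  obtain ⟨_, _, hC, hD, hq⟩ := exists_isUnitriangular_quasimonomial_mul_mul X
  obtain ⟨a, rfl⟩ := hC.exists_coe_eq
  obtain ⟨b, rfl⟩ := hD.exists_coe_eq
  refine ⟨_, ⟨hq, a⁻¹, b, by rw [inv_inv]⟩, ?_⟩
  rintro _ ⟨hT, a', b', rfl⟩
  refine hq.eq_of_mul_eq_mul (a * a').2 (b⁻¹ * b').2 hT ?_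
  simp [Matrix.mul_assoc]

/-- Every orbit of `U_s × U_t` acting on `s × t` matrices by `X^(A,B) = A⁻¹XB` contains a
unique quasimonomial matrix. -/
theorem stmt_0 (p q : ℕ) (hp : p.Prime) (hpq : ∃ m : ℕ, 0 < m ∧ q = p ^ m)
    (F : Type) [Field F] [Fintype F] (hF : Fintype.card F = q)
    (s t : ℕ) (hs : 1 ≤ s) (ht : 1 ≤ t) (X : Matrix (Fin s) (Fin t) F) :
    ∃! T : Matrix (Fin s) (Fin t) F, Quasimonomial T ∧
      ∃ (A : UT F s) (B : UT F t),
        T = (((A⁻¹ : UT F s) : GL (Fin s) F) : Matrix (Fin s) (Fin s) F) * X *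
          ((B : GL (Fin t) F) : Matrix (Fin t) (Fin t) F) :=
  stmt_0_general F s t X
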